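/- arXiv:2502.09483 — 2 statements merged into one kernel-verified Lean document; each statement's English description precedes it below -/
import Mathlib

section
/- Let n ≥ 1, 0 ≤ f ≤ 1, and 1 ≤ m ≤ n. Then p_accept := (f^n - 4^(-n))/(1 - 4^(-n)) + ((1 - f^n)/(1 - 4^(-n))) * 2^m * 4^(n-m) / 4^n satisfies f^n ≤ p_accept ≤ f^n + 2^(-m) * (1 - f^n). -/
private lemma pacc_aux1 (F t b : ℝ) (ht : t ≠ 0) (hb : b ≠ 0)
    (h1 : t ^ 2 * b - 1 ≠ 0) :
    (F - (t ^ 2 * b)⁻¹) / (1 - (t ^ 2 * b)⁻¹) +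
      (1 - F) / (1 - (t ^ 2 * b)⁻¹) * t * b / (t ^ 2 * b) - F
      = (1 - F) * (t * b - 1) / (t ^ 2 * b - 1) := by
  have hne : t ^ 2 * b ≠ 0 := mul_ne_zero (pow_ne_zero 2 ht) hb
  have hd : 1 - (t ^ 2 * b)⁻¹ ≠ 0 := by
    rw [sub_ne_zero]
    intro h
    apply h1
    rw [← inv_inv (t ^ 2 * b), ← h]
    simp
  field_simp
  ring

private lemma pacc_aux2 (F t b : ℝ) (ht : t ≠ 0) (hb : b ≠ 0)
    (h1 : t ^ 2 * b - 1 ≠ 0) :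
    F + t⁻¹ * (1 - F) - ((F - (t ^ 2 * b)⁻¹) / (1 - (t ^ 2 * b)⁻¹) +
      (1 - F) / (1 - (t ^ 2 * b)⁻¹) * t * b / (t ^ 2 * b))
      = (1 - F) * (t - 1) / (t * (t ^ 2 * b - 1)) := by
  have hne : t ^ 2 * b ≠ 0 := mul_ne_zero (pow_ne_zero 2 ht) hb
  have hd : 1 - (t ^ 2 * b)⁻¹ ≠ 0 := by
    rw [sub_ne_zero]
    intro h
    apply h1
    rw [← inv_inv (t ^ 2 * b), ← h]
    simp
  field_simp
  ring


theorem pacc_bounds (n m : ℕ) (f : ℝ) (hn : 1 ≤ n) (hf0 : 0 ≤ f) (hf1 : f ≤ 1)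
    (hm1 : 1 ≤ m) (hmn : m ≤ n) :
    f ^ n ≤ (f ^ n - (4:ℝ) ^ (-(n:ℤ))) / (1 - (4:ℝ) ^ (-(n:ℤ)))
        + ((1 - f ^ n) / (1 - (4:ℝ) ^ (-(n:ℤ)))) * 2 ^ m * 4 ^ (n - m) / 4 ^ n ∧
    (f ^ n - (4:ℝ) ^ (-(n:ℤ))) / (1 - (4:ℝ) ^ (-(n:ℤ)))
        + ((1 - f ^ n) / (1 - (4:ℝ) ^ (-(n:ℤ)))) * 2 ^ m * 4 ^ (n - m) / 4 ^ n
      ≤ f ^ n + (2:ℝ) ^ (-(m:ℤ)) * (1 - f ^ n) := by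
  have hF0 : (0:ℝ) ≤ f ^ n := pow_nonneg hf0 n
  have hF1 : f ^ n ≤ 1 := pow_le_one₀ hf0 hf1
  have hz4 : (4:ℝ) ^ (-(n:ℤ)) = ((4:ℝ) ^ n)⁻¹ := by
    rw [zpow_neg, zpow_natCast]
  have hz2 : (2:ℝ) ^ (-(m:ℤ)) = ((2:ℝ) ^ m)⁻¹ := by
    rw [zpow_neg, zpow_natCast]
  have hsplit : (4:ℝ) ^ n = 4 ^ m * 4 ^ (n - m) := by
    rw [← pow_add]; congr 1; omega
  have h4m : (4:ℝ) ^ m = (2 ^ m) ^ 2 := by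
    rw [← pow_mul, pow_mul']; norm_num
  have h4n : (4:ℝ) ^ n = (2 ^ n) ^ 2 := by
    rw [← pow_mul, pow_mul']; norm_num
  have h2m : (2:ℝ) ≤ 2 ^ m := by
    calc (2:ℝ) = 2 ^ 1 := (pow_one 2).symm
    _ ≤ 2 ^ m := pow_le_pow_right₀ (by norm_num) hm1
  have h2n : (2:ℝ) ≤ 2 ^ n := by
    calc (2:ℝ) = 2 ^ 1 := (pow_one 2).symm
    _ ≤ 2 ^ n := pow_le_pow_right₀ (by norm_num) hn
  have hmn2 : (2:ℝ) ^ m ≤ 2 ^ n := pow_le_pow_right₀ (by norm_num) hmn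
  have h4nm : (0:ℝ) < 4 ^ (n - m) := by positivity
  have h4npos : (0:ℝ) < 4 ^ n := by positivity
  have hqlt : (4:ℝ) ^ (-(n:ℤ)) < 1 := by
    rw [hz4]
    rw [inv_lt_one_iff₀]; right; nlinarith
  have hden : (0:ℝ) < 1 - (4:ℝ) ^ (-(n:ℤ)) := by linarith
  rw [hz4] at hden ⊢
  rw [hz2]
  have h2mpos : (0:ℝ) < 2 ^ m := by linarith
  have h2npos : (0:ℝ) < 2 ^ n := by linarith
  have hbne : ((4:ℝ) ^ (n - m)) ≠ 0 := ne_of_gt h4nm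
  have htne : ((2:ℝ) ^ m) ≠ 0 := ne_of_gt h2mpos
  rw [hsplit, h4m] at hden ⊢
  have hdenne : (1 - (((2:ℝ)^m)^2 * 4^(n-m))⁻¹) ≠ 0 := ne_of_gt hden
  have hprodpos : (0:ℝ) < ((2:ℝ)^m)^2 * 4^(n-m) := by positivity
  have hb1 : (1:ℝ) ≤ 4 ^ (n - m) := one_le_pow₀ (by norm_num)
  set F := f ^ n with hFdef
  set t := (2:ℝ) ^ m with htdef
  set b := (4:ℝ) ^ (n - m) with hbdef
  have hgt1 : (1:ℝ) < t ^ 2 * b := by nlinarith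
  have hne1 : t ^ 2 * b ≠ 0 := by positivity
  have hne2 : t ^ 2 * b - 1 ≠ 0 := by nlinarith
  have htne0 : t ≠ 0 := ne_of_gt h2mpos
  have key := pacc_aux1 F t b htne0 hbne hne2
  constructor
  · rw [← sub_nonneg, key]
    apply div_nonneg (mul_nonneg (by linarith) (by nlinarith)) (by nlinarith)
  · rw [← sub_nonneg]
    have key2 := pacc_aux2 F t b htne0 hbne hne2
    rw [key2]
    apply div_nonneg (mul_nonneg (by linarith) (by linarith))
    have : (0:ℝ) < t * (t ^ 2 * b - 1) := mul_pos h2mpos (by linarith)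
    linarith
end

section
/- For n ≥ 2, the distribution π(w) ∝ C(n,w)·(3/4)^w·(1/4)^(n-w) on w ∈ {1,...,n} is stationary for the birth-death chain with transition probabilities T(w+1,w) = 6w(n-w)/(5n(n-1)), T(w-1,w) = 2w(w-1)/(5n(n-1)), T(w,w) = 1 - T(w+1,w) - T(w-1,w); equivalently, the detailed balance condition π(w)·T(w+1,w) = π(w+1)·T(w,w+1) holds for all 1 ≤ w ≤ n-1. -/
theorem stationary_detailed_balance (n w : ℕ) (hn : 2 ≤ n) (hw1 : 1 ≤ w) (hw2 : w ≤ n - 1) :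
    ((n.choose w : ℝ) * (3/4) ^ w * (1/4) ^ (n - w))
        * (6 * (w:ℝ) * ((n:ℝ) - w) / (5 * n * (n - 1)))
      = ((n.choose (w + 1) : ℝ) * (3/4) ^ (w + 1) * (1/4) ^ (n - (w + 1)))
        * (2 * ((w:ℝ) + 1) * w / (5 * n * (n - 1))) := by
  have hwn : w < n := by omega
  have hsub : n - w = (n - (w + 1)) + 1 := by omega
  have hch : ((n.choose (w+1) : ℝ)) * ((w:ℝ) + 1) = (n.choose w : ℝ) * ((n - w : ℕ) : ℝ) := by
    have h2 := Nat.choose_succ_right_eq n w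
    have := congrArg (fun k : ℕ => (k : ℝ)) h2
    push_cast at this
    linarith
  have hcast : ((n:ℝ) - w) = ((n - w : ℕ) : ℝ) := by
    rw [Nat.cast_sub hwn.le]
  have key : ((n.choose w : ℝ) * (3/4) ^ w * (1/4) ^ (n - w)) * (6 * (w:ℝ) * ((n:ℝ) - w))
      = ((n.choose (w + 1) : ℝ) * (3/4) ^ (w + 1) * (1/4) ^ (n - (w + 1)))
        * (2 * ((w:ℝ) + 1) * w) := by
    rw [hsub, pow_succ, pow_succ, hcast]
    linear_combination ((3/4 : ℝ)^w * (1/4)^(n-(w+1)) * (-3/2) * w) * hch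
  rw [mul_div_assoc', mul_div_assoc', key]
end
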